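/- Let A ⊆ [0,1] and Y : [0,1] → ℕ be bijective from A onto ℕ. Then the function f(x) = 2^{−(Y(x)+1)} for x ∈ A and f(x) = 0 otherwise has total variation on [0,1] that is finite (the supremum over partitions of ∑|f(x_{i+1}) − f(x_i)| exists and equals at most 2). -/

import Mathlib

open Set Finset

/-!
Every finite sum of `f` is at most `∑ₙ 2^{-(n+1)} = 1`, since `Y` sends distinct points of `A` to
distinct exponents. Bounding `|f(x_{i+1}) - f(x_i)| ≤ |f(x_{i+1})| + |f(x_i)|` splits a variation sum
into two such finite sums, because the partition points are pairwise distinct.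
-/

lemma sum_two_zpow_neg_succ_le_one (u : Finset ℕ) :
    ∑ n ∈ u, (2:ℝ) ^ (-(n + 1 : ℤ)) ≤ 1 := by
  have h_eq : ∀ n : ℕ, (2:ℝ) ^ (-(n + 1 : ℤ)) = 1 / 2 / 2 ^ n := fun n => by
    rw [zpow_neg, ← Nat.cast_succ, zpow_natCast, pow_succ]
    field_simp
  simp only [h_eq]
  calc ∑ n ∈ u, (1:ℝ) / 2 / 2 ^ n ≤ ∑' n : ℕ, (1:ℝ) / 2 / 2 ^ n :=
        (summable_geometric_two' 1).sum_le_tsum u fun n _ => by positivity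
    _ = 1 := tsum_geometric_two' 1

lemma sum_abs_le_one_of_injOn {α : Type*} {A : Set α} {Y : α → ℕ} (hY : InjOn Y A)
    {f : α → ℝ} (hfA : ∀ a ∈ A, f a = (2:ℝ) ^ (-(Y a + 1 : ℤ))) (hf0 : ∀ a ∉ A, f a = 0)
    (s : Finset α) : ∑ a ∈ s, |f a| ≤ 1 := by
  classical
  have h_mem : ∀ a ∈ s.filter (· ∈ A), a ∈ A := fun a ha => (Finset.mem_filter.mp ha).2
  calc ∑ a ∈ s, |f a| = ∑ a ∈ s.filter (· ∈ A), |f a| :=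
        (Finset.sum_filter_of_ne fun a _ ha => not_not.mp fun h => ha (by simp [hf0 a h])).symm
    _ = ∑ n ∈ (s.filter (· ∈ A)).image Y, (2:ℝ) ^ (-(n + 1 : ℤ)) := by
        rw [Finset.sum_image fun a ha b hb => hY (h_mem a ha) (h_mem b hb)]
        exact Finset.sum_congr rfl fun a ha => by
          rw [hfA a (h_mem a ha), abs_of_pos (by positivity)]
    _ ≤ 1 := sum_two_zpow_neg_succ_le_one _

lemma sum_abs_sub_le_two_mul_of_injOn {α : Type*} {g : α → ℝ} {C : ℝ}
    (hg : ∀ s : Finset α, ∑ a ∈ s, |g a| ≤ C) {x : ℕ → α} {n : ℕ} (hx : InjOn x (Set.Iic n)) :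
    ∑ i ∈ range n, |g (x (i + 1)) - g (x i)| ≤ 2 * C := by
  classical
  have h_mem : ∀ i ∈ range n, i ∈ Set.Iic n ∧ i + 1 ∈ Set.Iic n := fun i hi => by
    simp only [Finset.mem_range] at hi; simp only [Set.mem_Iic]; omega
  have h_succ : ∑ i ∈ range n, |g (x (i + 1))| ≤ C :=
    calc _ = ∑ a ∈ (range n).image (fun i => x (i + 1)), |g a| :=
          (Finset.sum_image fun i hi j hj h =>
            Nat.succ_injective (hx (h_mem i hi).2 (h_mem j hj).2 h)).symm
      _ ≤ C := hg _
  have h_self : ∑ i ∈ range n, |g (x i)| ≤ C :=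
    calc _ = ∑ a ∈ (range n).image x, |g a| :=
          (Finset.sum_image fun i hi j hj h => hx (h_mem i hi).1 (h_mem j hj).1 h).symm
      _ ≤ C := hg _
  calc ∑ i ∈ range n, |g (x (i + 1)) - g (x i)|
      ≤ ∑ i ∈ range n, (|g (x (i + 1))| + |g (x i)|) :=
        Finset.sum_le_sum fun i _ => abs_sub _ _
    _ = ∑ i ∈ range n, |g (x (i + 1))| + ∑ i ∈ range n, |g (x i)| := Finset.sum_add_distrib
    _ ≤ 2 * C := by linarith

theorem bijective_indicator_total_variation_le_two_general
    (A : Set ℝ)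
    (Y : ℝ → ℕ)
    (hYinj : ∀ x ∈ A, ∀ y ∈ A, Y x = Y y → x = y)
    (f : ℝ → ℝ)
    (hf : ∀ x, (x ∈ A → f x = (2:ℝ) ^ (-(Y x + 1 : ℤ))) ∧ (x ∉ A → f x = 0))
    (V : Set ℝ)
    (hV : V = {s : ℝ | ∃ (n : ℕ) (x : ℕ → ℝ), x 0 = 0 ∧ x n = 1 ∧
      (∀ i < n, x i < x (i + 1)) ∧
      s = ∑ i ∈ Finset.range n, |f (x (i + 1)) - f (x i)|}) :
    BddAbove V ∧ sSup V ≤ 2 := by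
  have h_finite_sums : ∀ s : Finset ℝ, ∑ a ∈ s, |f a| ≤ 1 :=
    sum_abs_le_one_of_injOn (fun x hx y hy => hYinj x hx y hy)
      (fun x => (hf x).1) (fun x => (hf x).2)
  have h_bound : ∀ s ∈ V, s ≤ 2 := by
    subst hV
    rintro _ ⟨n, x, -, -, h_step, rfl⟩
    have h_inj : InjOn x (Set.Iic n) := (strictMonoOn_Iic_of_lt_succ h_step).injOn
    exact (sum_abs_sub_le_two_mul_of_injOn h_finite_sums h_inj).trans_eq (mul_one 2)
  exact ⟨⟨2, h_bound⟩, Real.sSup_le h_bound zero_le_two⟩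

theorem bijective_indicator_total_variation_le_two
    (A : Set ℝ) (hA : A ⊆ Icc (0:ℝ) 1)
    (Y : ℝ → ℕ)
    (hYinj : ∀ x ∈ A, ∀ y ∈ A, Y x = Y y → x = y)
    (hYsurj : ∀ n : ℕ, ∃ x ∈ A, Y x = n)
    (f : ℝ → ℝ)
    (hf : ∀ x, (x ∈ A → f x = (2:ℝ) ^ (-(Y x + 1 : ℤ))) ∧ (x ∉ A → f x = 0))
    (V : Set ℝ)
    (hV : V = {s : ℝ | ∃ (n : ℕ) (x : ℕ → ℝ), x 0 = 0 ∧ x n = 1 ∧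
      (∀ i < n, x i < x (i + 1)) ∧
      s = ∑ i ∈ Finset.range n, |f (x (i + 1)) - f (x i)|}) :
    BddAbove V ∧ sSup V ≤ 2 :=
  bijective_indicator_total_variation_le_two_general A Y hYinj f hf V hV
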